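/- arXiv:1602.05610 — 4 statements merged into one kernel-verified Lean document; each statement's English description precedes it below -/
import Mathlib

section
/- Let σ > 0, let p be a nonnegative integer, and let x ∈ ℝ. Then the Gaussian convolution of the monomial y ↦ y^p satisfies ∫_ℝ y^p · k_σ(x − y) dy = (iσ)^p · h_p(x/(iσ)), where the right-hand side is evaluated over the complex numbers (and is in fact real), i is the imaginary unit, and h_p is the p-th probabilist's Hermite polynomial. -/
/-!
After the substitution `y ↦ x - y` the integral is the moment `mₚ = ∫ (x - u)ᵖ k_σ(u) du`.
Gaussian integration by parts, `∫ u f(u) k_σ(u) du = σ² ∫ f'(u) k_σ(u) du`, gives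
`mₚ₊₂ = x mₚ₊₁ + (p + 1) σ² mₚ` with `m₀ = 1`, `m₁ = x`. For `w = iσ` we have `w² = -σ²`, so this
is the recurrence `hₚ₊₂(z) = z hₚ₊₁(z) - (p + 1) hₚ(z)` satisfied by `wᵖ hₚ(x / w)`.
-/

open MeasureTheory

/-- One-dimensional Gaussian kernel `k_σ(x) = (√(2π) σ)⁻¹ exp(−x²/(2σ²))`. -/
noncomputable def gauss1 (σ x : ℝ) : ℝ :=
  (Real.sqrt (2 * Real.pi) * σ)⁻¹ * Real.exp (-x ^ 2 / (2 * σ ^ 2))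

open Polynomial

namespace Polynomial

theorem derivative_hermite_succ (n : ℕ) :
    derivative (hermite (n + 1)) = ((n : ℤ[X]) + 1) * hermite n := by
  induction n with
  | zero => simp
  | succ n ih =>
    rw [hermite_succ (n + 1), derivative_sub, derivative_mul, derivative_X, one_mul, ih,
      derivative_mul, hermite_succ n]
    simp only [derivative_add, derivative_natCast, derivative_one]
    push_cast
    ring

theorem hermite_add_two (n : ℕ) :
    hermite (n + 2) = X * hermite (n + 1) - ((n : ℤ[X]) + 1) * hermite n := by
  rw [hermite_succ (n + 1), derivative_hermite_succ]

theorem eq_pow_mul_aeval_hermite_div {K : Type*} [Field K] {w : K} (hw : w ≠ 0) (z : K)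
    {m : ℕ → K} (h0 : m 0 = 1) (h1 : m 1 = z)
    (hrec : ∀ n : ℕ, m (n + 2) = z * m (n + 1) - (n + 1) * w ^ 2 * m n) (n : ℕ) :
    m n = w ^ n * aeval (z / w) (hermite n) := by
  induction n using Nat.twoStepInduction with
  | zero => simp [h0]
  | one => rw [h1, hermite_one, aeval_X]; field_simp
  | more n ih ih1 =>
    rw [hrec, ih, ih1, hermite_add_two, map_sub, map_mul, map_mul, aeval_X]
    simp only [map_add, map_natCast, map_one]
    field_simp
    ring

end Polynomial

open Real

theorem gauss1_eq_mul_exp_neg_mul_sq (σ y : ℝ) :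
    gauss1 σ y = (√(2 * π) * σ)⁻¹ * exp (-(2 * σ ^ 2)⁻¹ * y ^ 2) := by
  rw [gauss1, neg_div, neg_mul, div_eq_inv_mul]

theorem hasDerivAt_gauss1 (σ y : ℝ) : HasDerivAt (gauss1 σ) (-y / σ ^ 2 * gauss1 σ y) y := by
  have h := (((hasDerivAt_pow 2 y).fun_neg.div_const (2 * σ ^ 2)).exp).const_mul
    (√(2 * π) * σ)⁻¹
  refine h.congr_deriv ?_
  unfold gauss1
  ring

theorem integrable_eval_mul_exp_neg_mul_sq {b : ℝ} (hb : 0 < b) (P : ℝ[X]) :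
    Integrable fun y : ℝ => P.eval y * exp (-b * y ^ 2) := by
  induction P using Polynomial.induction_on' with
  | add P Q hP hQ => simpa [add_mul, Pi.add_def] using hP.add hQ
  | monomial n a =>
    have h := integrable_rpow_mul_exp_neg_mul_sq hb (s := n) (by linarith [n.cast_nonneg (α := ℝ)])
    simp_rw [rpow_natCast] at h
    simpa [mul_assoc] using h.const_mul a

section Gaussian

variable {σ : ℝ} (hσ : 0 < σ)
include hσ

theorem integrable_eval_mul_gauss1 (P : ℝ[X]) : Integrable fun y : ℝ => P.eval y * gauss1 σ y := by
  simp_rw [gauss1_eq_mul_exp_neg_mul_sq, mul_left_comm (P.eval _)]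
  exact (integrable_eval_mul_exp_neg_mul_sq (by positivity) P).const_mul _

theorem integral_gauss1 : ∫ y : ℝ, gauss1 σ y = 1 := by
  simp_rw [gauss1_eq_mul_exp_neg_mul_sq]
  rw [integral_const_mul, integral_gaussian, div_inv_eq_mul,
    show π * (2 * σ ^ 2) = 2 * π * σ ^ 2 by ring, sqrt_mul' _ (sq_nonneg σ), sqrt_sq hσ.le]
  exact inv_mul_cancel₀ (by positivity)

theorem integral_mul_eval_mul_gauss1 (P : ℝ[X]) :
    ∫ y : ℝ, y * P.eval y * gauss1 σ y = σ ^ 2 * ∫ y : ℝ, P.derivative.eval y * gauss1 σ y := by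
  have hσ2 : σ ^ 2 ≠ 0 := by positivity
  have hmul : Integrable ((fun y => P.eval y) * fun y => -y / σ ^ 2 * gauss1 σ y) := by
    refine ((integrable_eval_mul_gauss1 hσ (X * P)).const_mul (-(σ ^ 2)⁻¹)).congr
      (.of_forall fun y => ?_)
    simp only [eval_mul, eval_X, Pi.mul_apply]
    field_simp
  have ibp := integral_mul_deriv_eq_deriv_mul_of_integrable (fun y _ => P.hasDerivAt y)
    (fun y _ => hasDerivAt_gauss1 σ y) hmul (integrable_eval_mul_gauss1 hσ _)
    (integrable_eval_mul_gauss1 hσ _)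
  calc ∫ y : ℝ, y * P.eval y * gauss1 σ y
      = -σ ^ 2 * ∫ y : ℝ, P.eval y * (-y / σ ^ 2 * gauss1 σ y) := by
        rw [← integral_const_mul]
        congr with y
        field_simp
    _ = σ ^ 2 * ∫ y : ℝ, P.derivative.eval y * gauss1 σ y := by
        rw [ibp]
        ring

theorem integral_sub_mul_gauss1 (x : ℝ) : ∫ y : ℝ, (x - y) * gauss1 σ y = x := by
  have hmean : ∫ y : ℝ, y * gauss1 σ y = 0 := by simpa using integral_mul_eval_mul_gauss1 hσ 1
  have hconst : Integrable fun y : ℝ => x * gauss1 σ y :=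
    (integrable_eval_mul_gauss1 hσ (C x)).congr (.of_forall fun y => by simp)
  have hid : Integrable fun y : ℝ => y * gauss1 σ y :=
    (integrable_eval_mul_gauss1 hσ X).congr (.of_forall fun y => by simp)
  simp_rw [sub_mul]
  rw [integral_sub hconst hid, integral_const_mul, integral_gauss1 hσ, hmean, mul_one, sub_zero]

theorem integrable_sub_pow_mul_gauss1 (x : ℝ) (n : ℕ) :
    Integrable fun y : ℝ => (x - y) ^ n * gauss1 σ y :=
  (integrable_eval_mul_gauss1 hσ ((C x - X) ^ n)).congr (.of_forall fun y => by simp)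

theorem integral_mul_sub_pow_succ_mul_gauss1 (x : ℝ) (n : ℕ) :
    ∫ y : ℝ, y * (x - y) ^ (n + 1) * gauss1 σ y =
      -(σ ^ 2 * (n + 1) * ∫ y : ℝ, (x - y) ^ n * gauss1 σ y) := by
  have h := integral_mul_eval_mul_gauss1 hσ ((C x - X) ^ (n + 1))
  simp only [derivative_pow_succ, derivative_sub, derivative_C, derivative_X, zero_sub, mul_neg,
    mul_one, eval_neg, eval_mul, eval_pow, eval_sub, eval_C, eval_X] at h
  rw [h, ← integral_const_mul, ← integral_const_mul, ← integral_neg]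
  congr with y
  ring

theorem integral_sub_pow_add_two_mul_gauss1 (x : ℝ) (n : ℕ) :
    ∫ y : ℝ, (x - y) ^ (n + 2) * gauss1 σ y =
      x * (∫ y : ℝ, (x - y) ^ (n + 1) * gauss1 σ y) +
        σ ^ 2 * (n + 1) * ∫ y : ℝ, (x - y) ^ n * gauss1 σ y := by
  have hsplit : ∀ y : ℝ, (x - y) ^ (n + 2) * gauss1 σ y =
      x * ((x - y) ^ (n + 1) * gauss1 σ y) - y * (x - y) ^ (n + 1) * gauss1 σ y := fun y => by
    ring
  have hint : Integrable fun y : ℝ => y * (x - y) ^ (n + 1) * gauss1 σ y :=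
    (integrable_eval_mul_gauss1 hσ (X * (C x - X) ^ (n + 1))).congr (.of_forall fun y => by simp)
  rw [integral_congr_ae (.of_forall hsplit),
    integral_sub ((integrable_sub_pow_mul_gauss1 hσ x _).const_mul x) hint, integral_const_mul,
    integral_mul_sub_pow_succ_mul_gauss1 hσ, sub_neg_eq_add]

end Gaussian

theorem gaussian_convolution_monomial (σ : ℝ) (hσ : 0 < σ) (p : ℕ) (x : ℝ) :
    ((∫ y : ℝ, y ^ p * gauss1 σ (x - y)) : ℂ) =
      (Complex.I * σ) ^ p *
        Polynomial.aeval ((x : ℂ) / (Complex.I * σ)) (Polynomial.hermite p) := by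
  have hw : Complex.I * σ ≠ 0 := mul_ne_zero Complex.I_ne_zero (Complex.ofReal_ne_zero.2 hσ.ne')
  have hconv : ∫ y : ℝ, (y : ℂ) ^ p * (gauss1 σ (x - y) : ℂ) =
      ((∫ y : ℝ, (x - y) ^ p * gauss1 σ y : ℝ) : ℂ) := by
    rw [← integral_sub_left_eq_self _ volume x]
    simp only [sub_sub_cancel, ← Complex.ofReal_pow, ← Complex.ofReal_mul]
    exact integral_ofReal
  rw [hconv]
  refine eq_pow_mul_aeval_hermite_div hw x
    (m := fun n => ((∫ y : ℝ, (x - y) ^ n * gauss1 σ y : ℝ) : ℂ)) ?_ ?_ (fun n => ?_) p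
  · simp [integral_gauss1 hσ]
  · simp [integral_sub_mul_gauss1 hσ]
  · simp only [integral_sub_pow_add_two_mul_gauss1 hσ, mul_pow, Complex.I_sq]
    push_cast
    ring
end

section
/- (Antiderivative claim in the proof of Proposition 1.) Let σ > 0, δ > 0 and a, b, x ∈ ℝ. Then for every t ∈ ℝ, the derivative with respect to t of the function t ↦ (1/2) · k_{√(δ² + a²σ²)}(a x + b) · erf( (a σ² (a t + b) + δ² (t − x)) / (δ σ √(2(δ² + a²σ²))) ) equals k_δ(a t + b) · k_σ(x − t). -/
/-!
Completing the square in `t` factors `k_δ(a t + b) k_σ(x - t)` as `k_{√E}(a x + b) k_τ(t - μ)`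
with `E = δ² + a²σ²`, `μ = (δ² x - a σ² b) / E` and `τ = δσ / √E`. Since `erf` is the
antiderivative of `2/√π · exp(-y²)`, the function `erf ((t - μ) / (τ √2)) / 2` is an
antiderivative of `k_τ(t - μ)`, and the argument of `erf` in the claim is exactly `(t - μ) / (τ √2)`.
-/

open MeasureTheory

/-- The error function `erf(x) = (2/√π) ∫₀ˣ e^{−t²} dt`. -/
noncomputable def erf (x : ℝ) : ℝ :=
  (2 / Real.sqrt Real.pi) * ∫ t in (0 : ℝ)..x, Real.exp (-t ^ 2)

open Real

theorem hasDerivAt_erf (y : ℝ) : HasDerivAt erf (2 / √π * exp (-y ^ 2)) y :=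
  ((by fun_prop : Continuous fun t : ℝ => exp (-t ^ 2)).integral_hasStrictDerivAt 0 y
    |>.hasDerivAt.const_mul _)

theorem hasDerivAt_half_erf {s : ℝ} (hs : s ≠ 0) (μ t : ℝ) :
    HasDerivAt (fun r => 1 / 2 * erf ((r - μ) / (s * √2))) (gauss1 s (t - μ)) t := by
  have hinner : HasDerivAt (fun r => (r - μ) / (s * √2)) (1 / (s * √2)) t :=
    ((hasDerivAt_id t).sub_const μ).div_const _
  refine (((hasDerivAt_erf _).comp t hinner).const_mul (1 / 2)).congr_deriv ?_
  have h2 : √2 ^ 2 = 2 := sq_sqrt zero_le_two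
  unfold gauss1
  rw [sqrt_mul zero_le_two, div_pow, mul_pow, h2]
  field_simp

theorem sq_div_add_sq_div_eq {δ σ : ℝ} (hδ : δ ≠ 0) (hσ : σ ≠ 0) (a b x t : ℝ) :
    (a * t + b) ^ 2 / δ ^ 2 + (x - t) ^ 2 / σ ^ 2 =
      (a * x + b) ^ 2 / (δ ^ 2 + a ^ 2 * σ ^ 2) +
        (t - (δ ^ 2 * x - a * σ ^ 2 * b) / (δ ^ 2 + a ^ 2 * σ ^ 2)) ^ 2 /
          (δ ^ 2 * σ ^ 2 / (δ ^ 2 + a ^ 2 * σ ^ 2)) := by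
  have hE : δ ^ 2 + a ^ 2 * σ ^ 2 ≠ 0 := by positivity
  field_simp
  ring

theorem gauss1_mul_gauss1_eq {δ σ : ℝ} (hδ : δ ≠ 0) (hσ : σ ≠ 0) (a b x t : ℝ) :
    gauss1 δ (a * t + b) * gauss1 σ (x - t) =
      gauss1 √(δ ^ 2 + a ^ 2 * σ ^ 2) (a * x + b) *
        gauss1 (δ * σ / √(δ ^ 2 + a ^ 2 * σ ^ 2))
          (t - (δ ^ 2 * x - a * σ ^ 2 * b) / (δ ^ 2 + a ^ 2 * σ ^ 2)) := by
  have hE : 0 < δ ^ 2 + a ^ 2 * σ ^ 2 := by positivity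
  have hexp := sq_div_add_sq_div_eq hδ hσ a b x t
  unfold gauss1
  rw [mul_mul_mul_comm, mul_mul_mul_comm _ (exp _), ← exp_add, ← exp_add, div_pow, sq_sqrt hE.le]
  congr 1
  · field_simp
  · congr 1
    have half (p q : ℝ) : -p / (2 * q) = -(1 / 2) * (p / q) := by ring
    simp only [half, mul_pow]
    rw [← mul_add, ← mul_add, hexp]

theorem antiderivative_claim (σ δ a b x : ℝ) (hσ : 0 < σ) (hδ : 0 < δ) (t : ℝ) :
    HasDerivAt
      (fun s : ℝ => (1 / 2) * gauss1 (Real.sqrt (δ ^ 2 + a ^ 2 * σ ^ 2)) (a * x + b) *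
        erf ((a * σ ^ 2 * (a * s + b) + δ ^ 2 * (s - x)) /
          (δ * σ * Real.sqrt (2 * (δ ^ 2 + a ^ 2 * σ ^ 2)))))
      (gauss1 δ (a * t + b) * gauss1 σ (x - t)) t := by
  set E := δ ^ 2 + a ^ 2 * σ ^ 2
  have hE : 0 < E := by positivity
  set μ := (δ ^ 2 * x - a * σ ^ 2 * b) / E
  set τ := δ * σ / √E
  have hτ : τ ≠ 0 := by positivity
  have harg (s : ℝ) : (a * σ ^ 2 * (a * s + b) + δ ^ 2 * (s - x)) / (δ * σ * √(2 * E)) =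
      (s - μ) / (τ * √2) := by
    rw [sqrt_mul zero_le_two]
    simp only [τ, μ]
    field_simp
    rw [sq_sqrt hE.le]
    ring
  simp_rw [harg, gauss1_mul_gauss1_eq hδ.ne' hσ.ne', mul_assoc (1 / 2 : ℝ), mul_left_comm (1 / 2 : ℝ)]
  exact (hasDerivAt_half_erf hτ μ t).const_mul _
end

section
/- Let σ > 0 and x ∈ ℝ. Then ∫_ℝ sin²(y) · k_σ(x − y) dy = (1/2)(1 − e^{−2σ²} cos(2x)). -/
open MeasureTheory Complex

lemma gauss1_pointwise (σ : ℝ) (hσ : 0 < σ) (x : ℝ) (t : ℂ) (y : ℝ) :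
    Complex.exp (t * y) * (gauss1 σ (x - y) : ℂ) =
      ((Real.sqrt (2 * Real.pi) * σ : ℝ) : ℂ)⁻¹ *
        Complex.exp (-(1 / (2 * (σ : ℂ) ^ 2)) * y ^ 2 + ((x : ℂ) / σ ^ 2 + t) * y
          + -(x : ℂ) ^ 2 / (2 * σ ^ 2)) := by
  have hσ' : (σ : ℂ) ≠ 0 := by exact_mod_cast hσ.ne'
  simp only [gauss1]
  push_cast
  rw [mul_left_comm, ← Complex.exp_add]
  congr 2
  field_simp [hσ']
  ring

lemma gauss1_re_neg (σ : ℝ) (hσ : 0 < σ) : (-(1 / (2 * (σ : ℂ) ^ 2))).re < 0 := by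
  have h : -(1 / (2 * (σ : ℂ) ^ 2)) = ((-(1 / (2 * σ ^ 2)) : ℝ) : ℂ) := by norm_cast
  rw [h, Complex.ofReal_re]
  have : 0 < 1 / (2 * σ ^ 2) := by positivity
  linarith

lemma gauss1_integrable_exp (σ : ℝ) (hσ : 0 < σ) (x : ℝ) (t : ℂ) :
    Integrable (fun y : ℝ => Complex.exp (t * y) * (gauss1 σ (x - y) : ℂ)) := by
  have := (integrable_cexp_quadratic' (gauss1_re_neg σ hσ) ((x : ℂ) / σ ^ 2 + t)
      (-(x : ℂ) ^ 2 / (2 * σ ^ 2))).const_mul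
      (((Real.sqrt (2 * Real.pi) * σ : ℝ) : ℂ))⁻¹
  exact this.congr (Filter.Eventually.of_forall fun y =>
    (gauss1_pointwise σ hσ x t y).symm)

lemma gauss1_integral_exp (σ : ℝ) (hσ : 0 < σ) (x : ℝ) (t : ℂ) :
    (∫ y : ℝ, Complex.exp (t * y) * (gauss1 σ (x - y) : ℂ)) =
      Complex.exp (t * x + σ ^ 2 * t ^ 2 / 2) := by
  have hσ' : (σ : ℂ) ≠ 0 := by exact_mod_cast hσ.ne'
  simp_rw [gauss1_pointwise σ hσ x t]
  rw [integral_const_mul,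
    integral_cexp_quadratic (gauss1_re_neg σ hσ) ((x : ℂ) / σ ^ 2 + t)
      (-(x : ℂ) ^ 2 / (2 * σ ^ 2))]
  have hpow : (↑Real.pi / -(-(1 / (2 * (σ : ℂ) ^ 2)))) ^ (1 / 2 : ℂ) =
      ((Real.sqrt (2 * Real.pi) * σ : ℝ) : ℂ) := by
    have h1 : (↑Real.pi / -(-(1 / (2 * (σ : ℂ) ^ 2)))) = ((2 * Real.pi * σ ^ 2 : ℝ) : ℂ) := by
      push_cast; field_simp
    rw [h1, show (1 / 2 : ℂ) = ((1 / 2 : ℝ) : ℂ) by norm_num,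
      ← Complex.ofReal_cpow (by positivity) (1 / 2 : ℝ)]
    congr 1
    rw [← Real.sqrt_eq_rpow, Real.sqrt_mul (by positivity), Real.sqrt_sq hσ.le]
  rw [hpow, ← mul_assoc, inv_mul_cancel₀ (by
      push_cast
      exact mul_ne_zero (by
        exact_mod_cast (Real.sqrt_pos.mpr (by positivity)).ne') hσ'), one_mul]
  congr 1
  field_simp
  ring

theorem gaussian_smoothing_sin_sq (σ : ℝ) (hσ : 0 < σ) (x : ℝ) :
    (∫ y : ℝ, (Real.sin y) ^ 2 * gauss1 σ (x - y)) =
      (1 / 2) * (1 - Real.exp (-2 * σ ^ 2) * Real.cos (2 * x)) := by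
  have hI0 := gauss1_integral_exp σ hσ x 0
  have hIp := gauss1_integral_exp σ hσ x (2 * Complex.I)
  have hIm := gauss1_integral_exp σ hσ x (-(2 * Complex.I))
  have hintgr := gauss1_integrable_exp σ hσ x
  have hC : (∫ y : ℝ, (((Real.sin y) ^ 2 * gauss1 σ (x - y) : ℝ) : ℂ)) =
      ((1 / 2) * (1 - Real.exp (-2 * σ ^ 2) * Real.cos (2 * x)) : ℂ) := by
    have hrepr : ∀ y : ℝ, (((Real.sin y) ^ 2 * gauss1 σ (x - y) : ℝ) : ℂ) =
        (1 / 2 : ℂ) * (Complex.exp ((0 : ℂ) * y) * (gauss1 σ (x - y) : ℂ))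
          - (1 / 4 : ℂ) * (Complex.exp ((2 * Complex.I) * y) * (gauss1 σ (x - y) : ℂ))
          - (1 / 4 : ℂ) * (Complex.exp ((-(2 * Complex.I)) * y) * (gauss1 σ (x - y) : ℂ)) := by
      intro y
      push_cast
      have h3 : Complex.sin (y : ℂ) ^ 2 = (1 - Complex.cos (2 * (y : ℂ))) / 2 := by
        rw [Complex.cos_two_mul]
        linear_combination Complex.sin_sq_add_cos_sq (y : ℂ)
      rw [h3, Complex.cos, show ((2 : ℂ) * Complex.I) * y = (2 * (y : ℂ)) * Complex.I by ring,
        show (-(2 * Complex.I)) * (y : ℂ) = -(2 * (y : ℂ)) * Complex.I by ring,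
        zero_mul, Complex.exp_zero]
      ring
    have hA : Integrable (fun y : ℝ =>
        (1 / 2 : ℂ) * (Complex.exp ((0 : ℂ) * y) * (gauss1 σ (x - y) : ℂ))) :=
      (hintgr 0).const_mul _
    have hB : Integrable (fun y : ℝ =>
        (1 / 4 : ℂ) * (Complex.exp ((2 * Complex.I) * y) * (gauss1 σ (x - y) : ℂ))) :=
      (hintgr (2 * Complex.I)).const_mul _
    have hCc : Integrable (fun y : ℝ =>
        (1 / 4 : ℂ) * (Complex.exp ((-(2 * Complex.I)) * y) * (gauss1 σ (x - y) : ℂ))) :=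
      (hintgr (-(2 * Complex.I))).const_mul _
    have hAB : Integrable (fun y : ℝ =>
        (1 / 2 : ℂ) * (Complex.exp ((0 : ℂ) * y) * (gauss1 σ (x - y) : ℂ))
          - (1 / 4 : ℂ) * (Complex.exp ((2 * Complex.I) * y) * (gauss1 σ (x - y) : ℂ))) :=
      hA.sub hB
    simp_rw [hrepr]
    rw [integral_sub hAB hCc, integral_sub hA hB, integral_const_mul, integral_const_mul,
      integral_const_mul, hIp, hIm]
    have hp : (2 * Complex.I) * x + (σ : ℂ) ^ 2 * (2 * Complex.I) ^ 2 / 2 =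
        ((-2 * σ ^ 2 : ℝ) : ℂ) + ((2 * x : ℝ) : ℂ) * Complex.I := by
      push_cast; rw [mul_pow, Complex.I_sq]; ring
    have hm : (-(2 * Complex.I)) * x + (σ : ℂ) ^ 2 * (-(2 * Complex.I)) ^ 2 / 2 =
        ((-2 * σ ^ 2 : ℝ) : ℂ) + ((-(2 * x) : ℝ) : ℂ) * Complex.I := by
      push_cast; rw [neg_pow, mul_pow, Complex.I_sq]; ring
    norm_num at hI0
    simp only [zero_mul, Complex.exp_zero, one_mul]
    rw [hI0, hp, hm]
    simp only [Complex.exp_add, Complex.exp_mul_I, Complex.ofReal_neg,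
      Complex.cos_neg, Complex.sin_neg, ← Complex.ofReal_exp,
      ← Complex.ofReal_cos, ← Complex.ofReal_sin]
    ring
  have hcast : (∫ y : ℝ, (((Real.sin y) ^ 2 * gauss1 σ (x - y) : ℝ) : ℂ)) =
      ((∫ y : ℝ, (Real.sin y) ^ 2 * gauss1 σ (x - y) : ℝ) : ℂ) := integral_ofReal
  rw [hcast] at hC
  apply Complex.ofReal_injective
  rw [hC]
  push_cast
  ring
end

section
/- Let σ > 0 and x ∈ ℝ. Then the Gaussian smoothing of the rectifier y ↦ max(0, y) satisfies ∫_ℝ max(0, y) · k_σ(x − y) dy = (σ/√(2π)) e^{−x²/(2σ²)} + (1/2) x (1 + erf( x / (√2 σ) )). -/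
open MeasureTheory

/-!
Substituting `y = x + √2 σ u` turns the kernel into `e^{-u²}/√π` and the rectifier into
`√2 σ · max(0, a + u)` with `a = x/(√2 σ)`. On the half-line `u > -a`, the part `u e^{-u²}` has
the antiderivative `-e^{-u²}/2`, and the part `a e^{-u²}` integrates to `a (√π/2)(1 + erf a)`
after splitting at `0` and using that `e^{-u²}` is even.
-/

open Real Set Filter Topology

lemma integral_max_zero_add_mul (a : ℝ) (f : ℝ → ℝ) :
    ∫ u, max 0 (a + u) * f u = ∫ u in Ioi (-a), (a + u) * f u := by
  rw [← integral_indicator measurableSet_Ioi]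
  congr 1 with u
  by_cases hu : -a < u
  · rw [indicator_of_mem (mem_Ioi.mpr hu), max_eq_right (by linarith)]
  · rw [indicator_of_notMem (mt mem_Ioi.mp hu), max_eq_left (by linarith), zero_mul]

lemma integral_Ioi_mul_exp_neg_mul_sq {c : ℝ} (hc : 0 < c) (a : ℝ) :
    ∫ t in Ioi a, t * exp (-c * t ^ 2) = exp (-c * a ^ 2) / (2 * c) := by
  have hderiv (t : ℝ) :
      HasDerivAt (fun t ↦ -(exp (-c * t ^ 2) / (2 * c))) (t * exp (-c * t ^ 2)) t := by
    have hinner : HasDerivAt (fun t : ℝ ↦ -c * t ^ 2) (-c * (2 * t)) t := by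
      simpa using (hasDerivAt_pow 2 t).const_mul (-c)
    refine (hinner.exp.div_const (2 * c)).neg.congr_deriv ?_
    field_simp
  have hlim : Tendsto (fun t ↦ -(exp (-c * t ^ 2) / (2 * c))) atTop (𝓝 0) := by
    have h := (tendsto_pow_atTop two_ne_zero).const_mul_atTop_of_neg (neg_neg_iff_pos.mpr hc)
    simpa using ((tendsto_exp_atBot.comp h).div_const (2 * c)).neg
  rw [integral_Ioi_of_hasDerivAt_of_tendsto' (fun t _ ↦ hderiv t)
    (integrable_mul_exp_neg_mul_sq hc).integrableOn hlim]
  ring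

lemma integral_Ioi_neg_exp_neg_sq (a : ℝ) :
    ∫ t in Ioi (-a), exp (-t ^ 2) = √π / 2 * (1 + erf a) := by
  have hint : Integrable (fun t : ℝ ↦ exp (-t ^ 2)) := by
    simpa using integrable_exp_neg_mul_sq one_pos
  have hsplit := intervalIntegral.integral_interval_add_Ioi (a := -a) (b := 0)
    hint.integrableOn hint.integrableOn
  have heven : ∫ t in -a..0, exp (-t ^ 2) = ∫ t in 0..a, exp (-t ^ 2) := by
    simpa using (intervalIntegral.integral_comp_neg (a := 0) (b := a)
      (fun t ↦ exp (-t ^ 2))).symm.trans (by simp [even_two.neg_pow])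
  have hhalf : ∫ t in Ioi (0 : ℝ), exp (-t ^ 2) = √π / 2 := by
    simpa using integral_gaussian_Ioi 1
  rw [← hsplit, heven, hhalf, erf]
  field_simp
  ring

lemma integral_max_zero_add_mul_exp_neg_sq (a : ℝ) :
    ∫ u, max 0 (a + u) * exp (-u ^ 2) = exp (-a ^ 2) / 2 + a * (√π / 2 * (1 + erf a)) := by
  have h1 : ∫ u in Ioi (-a), u * exp (-u ^ 2) = exp (-a ^ 2) / 2 := by
    simpa using integral_Ioi_mul_exp_neg_mul_sq one_pos (-a)
  have hint : Integrable (fun u : ℝ ↦ exp (-u ^ 2)) := by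
    simpa using integrable_exp_neg_mul_sq one_pos
  have hint' : Integrable (fun u : ℝ ↦ u * exp (-u ^ 2)) := by
    simpa using integrable_mul_exp_neg_mul_sq one_pos
  simp_rw [integral_max_zero_add_mul, add_mul]
  rw [integral_add (hint.const_mul a).integrableOn hint'.integrableOn, integral_const_mul,
    integral_Ioi_neg_exp_neg_sq, h1]
  ring

lemma gauss1_neg_mul (σ u : ℝ) (hσ : σ ≠ 0) :
    gauss1 σ (-(√2 * σ * u)) = (√(2 * π) * σ)⁻¹ * exp (-u ^ 2) := by
  rw [gauss1]
  congr 2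
  field_simp
  rw [sq_sqrt zero_le_two]
  ring

lemma integral_mul_gauss1 (g : ℝ → ℝ) {σ : ℝ} (hσ : 0 < σ) (x : ℝ) :
    ∫ y, g y * gauss1 σ (x - y) = (√π)⁻¹ * ∫ u, g (x + √2 * σ * u) * exp (-u ^ 2) := by
  have hs : 0 < √2 * σ := by positivity
  have hsub :=
    Measure.integral_comp_mul_left (fun v ↦ g (x + v) * gauss1 σ (x - (x + v))) (√2 * σ)
  rw [integral_add_left_eq_self (fun y ↦ g y * gauss1 σ (x - y))] at hsub
  simp only [sub_add_cancel_left, gauss1_neg_mul σ _ hσ.ne', abs_inv, abs_of_pos hs,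
    smul_eq_mul] at hsub
  have hconst : (√(2 * π) * σ)⁻¹ = (√2 * σ)⁻¹ * (√π)⁻¹ := by
    rw [sqrt_mul zero_le_two]
    ring
  rw [← mul_right_inj' (inv_pos.mpr hs).ne', ← hsub]
  simp_rw [mul_left_comm (g _), integral_const_mul, hconst, mul_assoc]

theorem gaussian_smoothing_relu (σ : ℝ) (hσ : 0 < σ) (x : ℝ) :
    (∫ y : ℝ, max 0 y * gauss1 σ (x - y)) =
      (σ / Real.sqrt (2 * Real.pi)) * Real.exp (-x ^ 2 / (2 * σ ^ 2)) +
        (1 / 2) * x * (1 + erf (x / (Real.sqrt 2 * σ))) := by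
  set s := √2 * σ with hs_def
  have hs : 0 < s := by positivity
  have hrelu (u : ℝ) : max 0 (x + s * u) = s * max 0 (x / s + u) := by
    rw [mul_max_of_nonneg _ _ hs.le, mul_zero, mul_add, mul_div_cancel₀ _ hs.ne']
  have hexponent : -(x / s) ^ 2 = -x ^ 2 / (2 * σ ^ 2) := by
    rw [div_pow, hs_def, mul_pow, sq_sqrt zero_le_two, neg_div]
  rw [integral_mul_gauss1 _ hσ, ← hs_def]
  simp_rw [hrelu, mul_assoc s, integral_const_mul, integral_max_zero_add_mul_exp_neg_sq,
    hexponent]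
  rw [hs_def, sqrt_mul zero_le_two]
  generalize exp (-x ^ 2 / (2 * σ ^ 2)) = E
  field_simp
  linear_combination σ * E * sq_sqrt zero_le_two (x := 2)
end
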